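/- arXiv:1310.4383 — 4 statements merged into one kernel-verified Lean document; each statement's English description precedes it below -/
import Mathlib

section
/- For all finite simple graphs T, H, G, there is a bijection between Hom(T □ H, G) and Hom(H, ψ_T(G)); in particular |Hom(T □ H, G)| = |Hom(H, ψ_T(G))|. -/
/-- For graphs `T` and `G`, `ψ_T(G)` is the graph whose vertices are the
homomorphisms `h : T → G`, with `h₁` adjacent to `h₂` iff `h₁(v) ~ h₂(v)` in `G`
for every vertex `v` of `T`. (We require `T` to have at least one vertex so that
the adjacency relation is irreflexive.) -/
def psiGraph {VT W : Type} [Nonempty VT] (T : SimpleGraph VT) (G : SimpleGraph W) :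
    SimpleGraph (T →g G) where
  Adj h₁ h₂ := ∀ v : VT, G.Adj (h₁ v) (h₂ v)
  symm := by
    constructor
    intro a b h v
    exact (h v).symm
  loopless := by
    constructor
    intro a h
    exact (h (Classical.arbitrary VT)).ne rfl

/-! `ψ_T` is right adjoint to `T □ ·`: curried, a homomorphism out of `T □ H` is a family of
homomorphisms `T →g G` indexed by `H` that are pointwise adjacent along the edges of `H`. -/

namespace SimpleGraph

variable {VT VH W : Type} [Nonempty VT] (T : SimpleGraph VT) (H : SimpleGraph VH)
  (G : SimpleGraph W)

def boxProdHomCurry (f : T.boxProd H →g G) : H →g psiGraph T G where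
  toFun y := f.comp (T.boxProdLeft H y).toHom
  map_rel' hy _ := f.map_rel (boxProd_adj_right.2 hy)

def boxProdHomUncurry (g : H →g psiGraph T G) : T.boxProd H →g G where
  toFun p := g p.2 p.1
  map_rel' := by
    rintro ⟨x₁, y₁⟩ ⟨x₂, y₂⟩ h
    rcases boxProd_adj.1 h with ⟨hx, rfl⟩ | ⟨hy, rfl⟩
    · exact (g y₁).map_rel hx
    · exact g.map_rel hy x₁

def boxProdHomEquiv : (T.boxProd H →g G) ≃ (H →g psiGraph T G) where
  toFun := boxProdHomCurry T H G
  invFun := boxProdHomUncurry T H G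
  left_inv _ := rfl
  right_inv _ := rfl

end SimpleGraph

theorem boxProd_hom_equiv_general (VT VH W : Type)
    [Nonempty VT] (T : SimpleGraph VT) (H : SimpleGraph VH) (G : SimpleGraph W) :
    Nonempty ((T.boxProd H →g G) ≃ (H →g psiGraph T G)) ∧
      Nat.card (T.boxProd H →g G) = Nat.card (H →g psiGraph T G) :=
  ⟨⟨T.boxProdHomEquiv H G⟩, Nat.card_congr (T.boxProdHomEquiv H G)⟩

/-- for all finite simple graphs `T`, `H`, `G` there is a bijection
between `Hom(T □ H, G)` and `Hom(H, ψ_T(G))`; in particular the two sets have the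
same cardinality. -/
theorem boxProd_hom_equiv (VT VH W : Type) [Fintype VT] [Fintype VH] [Fintype W]
    [Nonempty VT] (T : SimpleGraph VT) (H : SimpleGraph VH) (G : SimpleGraph W) :
    Nonempty ((T.boxProd H →g G) ≃ (H →g psiGraph T G)) ∧
      Nat.card (T.boxProd H →g G) = Nat.card (H →g psiGraph T G) :=
  boxProd_hom_equiv_general VT VH W T H G
end

section
/- A bipartite graph H (without isolated vertices in the relevant sense) has Sidorenko's property if and only if t_H(G) ≥ t_{K_2}(G)^{|E(H)|} holds for all graphs G whose maximum degree is at most 4|E(G)|/|V(G)|. -/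
/-!
Only the converse needs proof. Split every vertex `v` of a graph `G` into `⌈deg v / (s + 1)⌉`
copies, `s = ⌊2|E(G)|/|V(G)|⌋`, each copy inheriting a block of at most `s + 1` edges of `v`.
The split graph has the same edges, at most twice as many vertices, maximum degree at most
`4|E|/|V|`, and (as `H` has no isolated vertex) no more copies of `H` than `G`. Applying the
hypothesis to it gives `t_{K₂}(G)^{e(H)} ≤ 4^{e(H)} t_H(G)`. Both densities are multiplicative
under tensor powers of `G`, so applying this to `G^{⊗n}` and letting `n → ∞` removes the
constant `4^{e(H)}`.
-/

open Filter Topology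

lemma le_of_forall_pow_le_mul_pow {x y C : ℝ} (hx : 0 ≤ x)
    (h : ∀ n : ℕ, y ^ (n + 1) ≤ C * x ^ (n + 1)) : y ≤ x := by
  by_contra! hxy
  have hy : 0 < y := hx.trans_lt hxy
  have hlim : Tendsto (fun n : ℕ => C * (x / y) ^ (n + 1)) atTop (𝓝 0) := by
    simpa using ((tendsto_pow_atTop_nhds_zero_of_lt_one (div_nonneg hx hy.le)
      ((div_lt_one hy).2 hxy)).comp (tendsto_add_atTop_nat 1)).const_mul C
  have : (1 : ℝ) ≤ 0 := ge_of_tendsto' hlim fun n => by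
    rw [div_pow, ← mul_div_assoc, le_div_iff₀ (pow_pos hy _), one_mul]
    exact h n
  linarith

lemma Nat.card_fiber_div_le {α : Type*} {f : α → ℕ} (hf : Function.Injective f) {t : ℕ}
    (ht : 0 < t) (i : ℕ) : Nat.card {x // f x / t = i} ≤ t := by
  simpa using Nat.card_le_card_of_injective (fun x : {x // f x / t = i} =>
      (⟨f x % t, Nat.mod_lt _ ht⟩ : Fin t)) fun x y hxy => Subtype.ext <| hf <| by
    rw [← Nat.div_add_mod (f x) t, ← Nat.div_add_mod (f y) t, x.2, y.2]
    exact congrArg (t * i + ·) (Fin.val_eq_of_eq hxy)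

namespace SimpleGraph

variable {V W : Type*}

lemma card_dart_eq_two_mul_card_edgeSet [Finite W] (G : SimpleGraph W) :
    Nat.card G.Dart = 2 * Nat.card G.edgeSet := by
  have := Fintype.ofFinite W
  classical
  rw [Nat.card_eq_fintype_card, dart_card_eq_twice_card_edges, edgeFinset_card,
    Nat.card_eq_fintype_card]

lemma sum_card_neighborSet [Fintype W] (G : SimpleGraph W) :
    ∑ v, Nat.card (G.neighborSet v) = 2 * Nat.card G.edgeSet := by
  classical
  simp_rw [Nat.card_eq_fintype_card, card_neighborSet_eq_degree, sum_degrees_eq_twice_card_edges,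
    edgeFinset_card]

lemma card_le_two_mul_card_edgeSet [Fintype V] {H : SimpleGraph V} (hH : ∀ v, ∃ w, H.Adj v w) :
    Fintype.card V ≤ 2 * Nat.card H.edgeSet := by
  rw [← sum_card_neighborSet, ← Finset.card_univ, Finset.card_eq_sum_ones]
  refine Finset.sum_le_sum fun v _ => ?_
  obtain ⟨w, hw⟩ := hH v
  have : Nonempty (H.neighborSet v) := ⟨⟨w, hw⟩⟩
  exact Nat.card_pos

section Density
variable [Fintype V] [Fintype W]

noncomputable def homDensity (H : SimpleGraph V) (G : SimpleGraph W) : ℝ :=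
  Nat.card (H →g G) / (Fintype.card W : ℝ) ^ Fintype.card V

noncomputable def edgeHomDensity (G : SimpleGraph W) : ℝ :=
  2 * Nat.card G.edgeSet / (Fintype.card W : ℝ) ^ 2

def MaxDegreeLeTwiceAverage (G : SimpleGraph W) : Prop :=
  ∀ v, (Nat.card (G.neighborSet v) : ℝ) ≤ 4 * Nat.card G.edgeSet / Fintype.card W

lemma homDensity_nonneg (H : SimpleGraph V) (G : SimpleGraph W) : 0 ≤ homDensity H G := by
  unfold homDensity; positivity

lemma edgeHomDensity_eq_card_dart_div (G : SimpleGraph W) :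
    edgeHomDensity G = Nat.card G.Dart / (Fintype.card W : ℝ) ^ 2 := by
  rw [edgeHomDensity, card_dart_eq_two_mul_card_edgeSet, Nat.cast_mul, Nat.cast_ofNat]

lemma maxDegreeLeTwiceAverage_of_card_edgeSet_eq_zero {G : SimpleGraph W}
    (hG : Nat.card G.edgeSet = 0) : G.MaxDegreeLeTwiceAverage := fun v => by
  have : Nat.card (G.neighborSet v) = 0 := Finset.sum_eq_zero_iff.1
    (by rw [sum_card_neighborSet, hG, mul_zero]) v (Finset.mem_univ v)
  simp [this, hG]

end Density

def tensorPow (G : SimpleGraph W) (ι : Type*) [Nonempty ι] : SimpleGraph (ι → W) where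
  Adj f g := ∀ i, G.Adj (f i) (g i)
  symm := ⟨fun _ _ h i => (h i).symm⟩
  loopless := ⟨fun _ h => G.irrefl (h (Classical.arbitrary ι))⟩

section TensorPow
variable (H : SimpleGraph V) (G : SimpleGraph W) (ι : Type*) [Nonempty ι]

def homTensorPowEquiv : (H →g G.tensorPow ι) ≃ (ι → H →g G) where
  toFun φ i := ⟨fun a => φ a i, fun hab => φ.map_rel hab i⟩
  invFun F := ⟨fun a i => F i a, fun hab i => (F i).map_rel hab⟩

def dartTensorPowEquiv : (G.tensorPow ι).Dart ≃ (ι → G.Dart) where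
  toFun d i := ⟨(d.fst i, d.snd i), d.adj i⟩
  invFun F := ⟨(fun i => (F i).fst, fun i => (F i).snd), fun i => (F i).adj⟩

variable [Fintype ι] [DecidableEq ι] [Fintype V] [Fintype W]

lemma homDensity_tensorPow :
    homDensity H (G.tensorPow ι) = homDensity H G ^ Fintype.card ι := by
  rw [homDensity, homDensity, Nat.card_congr (homTensorPowEquiv H G ι), Nat.card_pi]
  simp [div_pow, ← pow_mul, mul_comm]

lemma edgeHomDensity_tensorPow :
    edgeHomDensity (G.tensorPow ι) = edgeHomDensity G ^ Fintype.card ι := by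
  rw [edgeHomDensity_eq_card_dart_div, edgeHomDensity_eq_card_dart_div,
    Nat.card_congr (dartTensorPowEquiv G ι), Nat.card_pi]
  simp [div_pow, ← pow_mul, mul_comm]

end TensorPow

section SplitAlong
variable {G : SimpleGraph W} {k : W → ℕ}

def splitAlong (G : SimpleGraph W) (c : ∀ v, G.neighborSet v → Fin (k v)) :
    SimpleGraph (Σ v, Fin (k v)) where
  Adj a b := ∃ h : G.Adj a.1 b.1, c a.1 ⟨b.1, h⟩ = a.2 ∧ c b.1 ⟨a.1, h.symm⟩ = b.2
  symm := ⟨fun _ _ ⟨h, ha, hb⟩ => ⟨h.symm, hb, ha⟩⟩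
  loopless := ⟨fun _ ⟨h, _⟩ => G.irrefl h⟩

variable {c : ∀ v, G.neighborSet v → Fin (k v)}

lemma splitAlong_adj_mk {v u : W} (h : G.Adj v u) :
    (G.splitAlong c).Adj ⟨v, c v ⟨u, h⟩⟩ ⟨u, c u ⟨v, h.symm⟩⟩ :=
  ⟨h, rfl, rfl⟩

lemma eq_of_splitAlong_adj {a b a' b' : Σ v, Fin (k v)} (h : (G.splitAlong c).Adj a b)
    (h' : (G.splitAlong c).Adj a' b') (ha : a.1 = a'.1) (hb : b.1 = b'.1) : a = a' := by
  obtain ⟨v, i⟩ := a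
  obtain ⟨u, j⟩ := b
  obtain ⟨v', i'⟩ := a'
  obtain ⟨u', j'⟩ := b'
  dsimp only at ha hb
  subst ha hb
  obtain ⟨_, hi, -⟩ := h
  obtain ⟨_, hi', -⟩ := h'
  exact congrArg _ (hi.symm.trans hi')

variable (c) in
def splitAlongDartEquiv : (G.splitAlong c).Dart ≃ G.Dart where
  toFun d := ⟨(d.fst.1, d.snd.1), d.adj.1⟩
  invFun d := ⟨(⟨d.fst, c _ ⟨d.snd, d.adj⟩⟩, ⟨d.snd, c _ ⟨d.fst, d.adj.symm⟩⟩),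
    splitAlong_adj_mk d.adj⟩
  left_inv d := Dart.ext _ _ <| Prod.ext
    (eq_of_splitAlong_adj (splitAlong_adj_mk (c := c) d.adj.1) d.adj rfl rfl)
    (eq_of_splitAlong_adj (splitAlong_adj_mk (c := c) d.adj.1).symm d.adj.symm rfl rfl)
  right_inv _ := rfl

lemma card_edgeSet_splitAlong [Finite W] :
    Nat.card (G.splitAlong c).edgeSet = Nat.card G.edgeSet := by
  have := Nat.card_congr (splitAlongDartEquiv c)
  rw [card_dart_eq_two_mul_card_edgeSet, card_dart_eq_two_mul_card_edgeSet] at this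
  omega

lemma card_neighborSet_splitAlong_le [Finite W] (a : Σ v, Fin (k v)) :
    Nat.card ((G.splitAlong c).neighborSet a) ≤ Nat.card {x // c a.1 x = a.2} :=
  Nat.card_le_card_of_injective (fun b => ⟨⟨b.1.1, b.2.1⟩, b.2.2.1⟩) fun b b' hbb' =>
    Subtype.ext <| eq_of_splitAlong_adj ((G.splitAlong c).adj_symm b.2)
      ((G.splitAlong c).adj_symm b'.2) (congrArg (fun x => x.1.1) hbb') rfl

variable (c) in
def splitAlongProj : G.splitAlong c →g G where
  toFun := Sigma.fst
  map_rel' h := h.1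

lemma card_hom_splitAlong_le [Finite V] [Finite W] {H : SimpleGraph V}
    (hH : ∀ v, ∃ w, H.Adj v w) : Nat.card (H →g G.splitAlong c) ≤ Nat.card (H →g G) :=
  Nat.card_le_card_of_injective (splitAlongProj c).comp fun f g hfg => by
    ext1 x
    obtain ⟨y, hxy⟩ := hH x
    exact eq_of_splitAlong_adj (f.map_rel hxy) (g.map_rel hxy) (DFunLike.congr_fun hfg x)
      (DFunLike.congr_fun hfg y)

end SplitAlong

section Split
variable [Fintype W] (G : SimpleGraph W)

noncomputable def copies (s : ℕ) (v : W) : ℕ := (Nat.card (G.neighborSet v) + s) / (s + 1)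

/-- Copy `i` of `v` receives the neighbours numbered `i (s + 1), …, i (s + 1) + s` in a fixed
enumeration of `G.neighborSet v`. -/
noncomputable def splitLabel (s : ℕ) (v : W) (x : G.neighborSet v) : Fin (G.copies s v) :=
  ⟨Finite.equivFin _ x / (s + 1), by
    have hx := (Finite.equivFin _ x).isLt
    have := Nat.lt_div_mul_add (a := Nat.card (G.neighborSet v) + s) (b := s + 1) (by omega)
    exact (Nat.div_lt_iff_lt_mul (by omega)).2 (by rw [copies]; omega)⟩

noncomputable abbrev split (s : ℕ) : SimpleGraph (Σ v, Fin (G.copies s v)) :=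
  G.splitAlong (G.splitLabel s)

lemma card_neighborSet_split_le (s : ℕ) (a : Σ v, Fin (G.copies s v)) :
    Nat.card ((G.split s).neighborSet a) ≤ s + 1 :=
  (card_neighborSet_splitAlong_le a).trans <|
    (Nat.card_congr (Equiv.subtypeEquivRight fun _ => Fin.ext_iff)).trans_le
      (Nat.card_fiber_div_le (Fin.val_injective.comp (Finite.equivFin _).injective)
        (by omega) a.2)

lemma succ_mul_card_split_le (s : ℕ) :
    (s + 1) * Fintype.card (Σ v, Fin (G.copies s v)) ≤
      2 * Nat.card G.edgeSet + Fintype.card W * s := by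
  rw [Fintype.card_sigma, Finset.mul_sum, ← sum_card_neighborSet, ← smul_eq_mul,
    ← Finset.card_univ, ← Finset.sum_const, ← Finset.sum_add_distrib]
  refine Finset.sum_le_sum fun v _ => ?_
  rw [Fintype.card_fin, copies, mul_comm]
  exact Nat.div_mul_le_self _ _

lemma card_split_le_two_mul {s : ℕ} (hs : 2 * Nat.card G.edgeSet < Fintype.card W * (s + 1)) :
    Fintype.card (Σ v, Fin (G.copies s v)) ≤ 2 * Fintype.card W := by
  have hsplit := G.succ_mul_card_split_le s
  refine (Nat.lt_of_mul_lt_mul_left (a := s + 1) ?_).le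
  nlinarith

lemma maxDegreeLeTwiceAverage_split {s : ℕ} (hs : Fintype.card W * s ≤ 2 * Nat.card G.edgeSet) :
    (G.split s).MaxDegreeLeTwiceAverage := fun a => by
  have hsplit := G.succ_mul_card_split_le s
  have hdeg := G.card_neighborSet_split_le s a
  rw [card_edgeSet_splitAlong, le_div_iff₀ (by exact_mod_cast Fintype.card_pos_iff.2 ⟨a⟩)]
  exact_mod_cast (Nat.mul_le_mul_right _ hdeg).trans (by omega)

end Split

lemma edgeHomDensity_pow_le_of_edgeHomDensity_pow_le {W' : Type*} [Fintype V] [Fintype W]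
    [Nonempty W] [Fintype W'] [Nonempty W'] {H : SimpleGraph V} {G : SimpleGraph W}
    {G' : SimpleGraph W'} (hV : Fintype.card V ≤ 2 * Nat.card H.edgeSet)
    (hE : Nat.card G'.edgeSet = Nat.card G.edgeSet)
    (hhom : Nat.card (H →g G') ≤ Nat.card (H →g G))
    (hW : Fintype.card W' ≤ 2 * Fintype.card W)
    (h' : edgeHomDensity G' ^ Nat.card H.edgeSet ≤ homDensity H G') :
    edgeHomDensity G ^ Nat.card H.edgeSet ≤ 4 ^ Nat.card H.edgeSet * homDensity H G := by
  set e := Nat.card H.edgeSet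
  set m := Fintype.card V
  have hw : (0 : ℝ) < Fintype.card W := by exact_mod_cast Fintype.card_pos
  set r : ℝ := Fintype.card W' / Fintype.card W
  have hr : 0 < r := by positivity
  have hr2 : r ≤ 2 := by
    rw [div_le_iff₀ hw]; exact_mod_cast hW
  have hK2 : edgeHomDensity G = edgeHomDensity G' * r ^ 2 := by
    simp only [edgeHomDensity, hE, r]; field_simp
  have hHom : homDensity H G' * r ^ m ≤ homDensity H G :=
    calc homDensity H G' * r ^ m = Nat.card (H →g G') / (Fintype.card W : ℝ) ^ m := by
          simp only [homDensity, r, m, div_pow]; field_simp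
      _ ≤ homDensity H G := by unfold homDensity; gcongr
  calc edgeHomDensity G ^ e = edgeHomDensity G' ^ e * r ^ m * r ^ (2 * e - m) := by
        rw [hK2, mul_pow, ← pow_mul, mul_assoc, ← pow_add, Nat.add_sub_cancel' hV, mul_comm 2]
    _ ≤ homDensity H G' * r ^ m * 2 ^ (2 * e - m) :=
        mul_le_mul (mul_le_mul_of_nonneg_right h' (by positivity))
          (pow_le_pow_left₀ hr.le hr2 _) (by positivity)
          (mul_nonneg (homDensity_nonneg H G') (by positivity))
    _ ≤ homDensity H G * 2 ^ (2 * e) :=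
        mul_le_mul hHom (pow_le_pow_right₀ one_le_two (Nat.sub_le _ _)) (by positivity)
          (homDensity_nonneg H G)
    _ = 4 ^ e * homDensity H G := by
        rw [mul_comm, pow_mul]; norm_num

lemma edgeHomDensity_pow_le_four_pow_mul_homDensity [Fintype V] {H : SimpleGraph V}
    (hH : ∀ v, ∃ w, H.Adj v w)
    (hbdd : ∀ (W : Type) [Fintype W] [Nonempty W] (G : SimpleGraph W),
      G.MaxDegreeLeTwiceAverage → edgeHomDensity G ^ Nat.card H.edgeSet ≤ homDensity H G)
    {W : Type} [Fintype W] [Nonempty W] (G : SimpleGraph W) :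
    edgeHomDensity G ^ Nat.card H.edgeSet ≤ 4 ^ Nat.card H.edgeSet * homDensity H G := by
  rcases (Nat.card G.edgeSet).eq_zero_or_pos with hE | hE
  · exact (hbdd W G (maxDegreeLeTwiceAverage_of_card_edgeSet_eq_zero hE)).trans
      (le_mul_of_one_le_left (homDensity_nonneg H G) (one_le_pow₀ (by norm_num)))
  · set s := 2 * Nat.card G.edgeSet / Fintype.card W
    obtain ⟨d⟩ : Nonempty G.Dart :=
      (Nat.card_pos_iff.1 (card_dart_eq_two_mul_card_edgeSet G ▸ by omega)).1
    have : Nonempty (Σ v, Fin (G.copies s v)) :=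
      ⟨((splitAlongDartEquiv (G.splitLabel s)).symm d).fst⟩
    exact edgeHomDensity_pow_le_of_edgeHomDensity_pow_le (card_le_two_mul_card_edgeSet hH)
      card_edgeSet_splitAlong (card_hom_splitAlong_le hH)
      (G.card_split_le_two_mul (Nat.lt_mul_div_succ _ Fintype.card_pos))
      (hbdd _ _ (G.maxDegreeLeTwiceAverage_split (Nat.mul_div_le _ _)))

end SimpleGraph

open SimpleGraph in
theorem sidorenko_iff_bounded_maxDegree_general (VH : Type) [Fintype VH]
    (H : SimpleGraph VH)
    (hiso : ∀ v : VH, ∃ w : VH, H.Adj v w) :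
    (∀ (W : Type) [Fintype W] [Nonempty W] (G : SimpleGraph W),
      (Nat.card (H →g G) : ℝ) / (Fintype.card W : ℝ) ^ (Fintype.card VH) ≥
        (2 * (Nat.card G.edgeSet : ℝ) / (Fintype.card W : ℝ) ^ 2) ^
          (Nat.card H.edgeSet)) ↔
    (∀ (W : Type) [Fintype W] [Nonempty W] (G : SimpleGraph W),
      (∀ v : W, (Nat.card (G.neighborSet v) : ℝ) ≤
          4 * (Nat.card G.edgeSet : ℝ) / (Fintype.card W : ℝ)) →
      (Nat.card (H →g G) : ℝ) / (Fintype.card W : ℝ) ^ (Fintype.card VH) ≥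
        (2 * (Nat.card G.edgeSet : ℝ) / (Fintype.card W : ℝ) ^ 2) ^
          (Nat.card H.edgeSet)) := by
  refine ⟨fun h W _ _ G _ => h W G, fun hbdd W _ _ G => ?_⟩
  refine le_of_forall_pow_le_mul_pow (C := 4 ^ Nat.card H.edgeSet) (homDensity_nonneg H G)
    fun n => ?_
  have := edgeHomDensity_pow_le_four_pow_mul_homDensity hiso hbdd (G.tensorPow (Fin (n + 1)))
  rwa [homDensity_tensorPow, edgeHomDensity_tensorPow, Fintype.card_fin, ← pow_mul, mul_comm,
    pow_mul] at this

/-- a bipartite graph `H` with no isolated vertices has Sidorenko's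
property if and only if `t_H(G) ≥ t_{K_2}(G)^{|E(H)|}` holds for all graphs `G`
whose maximum degree is at most `4|E(G)|/|V(G)|`. -/
theorem sidorenko_iff_bounded_maxDegree (VH : Type) [Fintype VH]
    (H : SimpleGraph VH) (hbip : H.Colorable 2)
    (hiso : ∀ v : VH, ∃ w : VH, H.Adj v w) :
    (∀ (W : Type) [Fintype W] [Nonempty W] (G : SimpleGraph W),
      (Nat.card (H →g G) : ℝ) / (Fintype.card W : ℝ) ^ (Fintype.card VH) ≥
        (2 * (Nat.card G.edgeSet : ℝ) / (Fintype.card W : ℝ) ^ 2) ^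
          (Nat.card H.edgeSet)) ↔
    (∀ (W : Type) [Fintype W] [Nonempty W] (G : SimpleGraph W),
      (∀ v : W, (Nat.card (G.neighborSet v) : ℝ) ≤
          4 * (Nat.card G.edgeSet : ℝ) / (Fintype.card W : ℝ)) →
      (Nat.card (H →g G) : ℝ) / (Fintype.card W : ℝ) ^ (Fintype.card VH) ≥
        (2 * (Nat.card G.edgeSet : ℝ) / (Fintype.card W : ℝ) ^ 2) ^
          (Nat.card H.edgeSet)) :=
  sidorenko_iff_bounded_maxDegree_general VH H hiso
end

section
/- Let U be an independent set of a bipartite graph H and T a tree on U such that for each u ∈ U, each component C of T\{u}, and the vertex u* ∈ C adjacent to u, the equality ⋃_{v∈C}(Λ_u ∩ Λ_v) = Λ_u ∩ Λ_{u*} holds. Then U is T-arrangeable, i.e., for every path P in T connecting u and v, Λ_u ∩ Λ_v = ⋂_{w∈P} Λ_w. -/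
/-- `U ⊆ V(H)` is `T`-arrangeable for a tree `T` on `U` if for every pair of
vertices `u, v ∈ U` and the path `P` in `T` connecting them,
`Λ_u ∩ Λ_v = ⋂_{w ∈ P} Λ_w`, where `Λ_x` is the neighborhood of `x` in `H`. -/
def Arrangeable {V : Type} (H : SimpleGraph V) (U : Set V)
    (T : SimpleGraph U) : Prop :=
  ∀ (u v : U) (p : T.Walk u v), p.IsPath →
    H.neighborSet ↑u ∩ H.neighborSet ↑v = ⋂ w ∈ p.support, H.neighborSet (↑w : V)

/-- The graph obtained from `T` by deleting the vertex `u` (removing all edges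
at `u`; the components of `T \ {u}` are the reachability classes avoiding `u`). -/
def deleteVert {α : Type} (T : SimpleGraph α) (u : α) : SimpleGraph α where
  Adj a b := T.Adj a b ∧ a ≠ u ∧ b ≠ u
  symm := by
    constructor
    rintro a b ⟨h, ha, hb⟩
    exact ⟨h.symm, hb, ha⟩
  loopless := by
    constructor
    rintro a ⟨h, -, -⟩
    exact T.ne_of_adj h rfl

/-!
Along a path `u = w₀, w₁, …, wₖ = v` of `T`, the tail `w₁ … wₖ` avoids `u`, so `v` lies in the
component of `T \ {u}` containing `w₁`; the hypothesis then gives `Λ_u ∩ Λ_v ⊆ Λ_{w₁}`. Hence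
`Λ_u ∩ Λ_v = Λ_u ∩ Λ_{w₁} ∩ Λ_v`, and induction on the path length finishes the proof.
-/

open SimpleGraph

lemma reachable_deleteVert_of_notMem_support {α : Type} {T : SimpleGraph α} {u a b : α}
    (p : T.Walk a b) (hu : u ∉ p.support) : (deleteVert T u).Reachable a b := by
  induction p with
  | nil => exact Reachable.refl _
  | cons h q ih =>
    rw [Walk.support_cons, List.mem_cons, not_or] at hu
    have hadj : (deleteVert T u).Adj _ _ :=
      ⟨h, Ne.symm hu.1, fun hb => hu.2 (hb ▸ q.start_mem_support)⟩
    exact hadj.reachable.trans (ih hu.2)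

lemma neighborSet_inter_subset_of_notMem_support {V : Type} {H : SimpleGraph V} {U : Set V}
    {T : SimpleGraph U} {a b c : U}
    (hab : ⋃ v ∈ {v : U | (deleteVert T a).Reachable b v},
        (H.neighborSet ↑a ∩ H.neighborSet (↑v : V)) = H.neighborSet ↑a ∩ H.neighborSet ↑b)
    (q : T.Walk b c) (ha : a ∉ q.support) :
    H.neighborSet (a : V) ∩ H.neighborSet (c : V) ⊆ H.neighborSet (b : V) :=
  fun _ hx => (hab.subset <| Set.mem_biUnion (reachable_deleteVert_of_notMem_support q ha) hx).2

theorem arrangeable_of_component_union_general (V : Type) (H : SimpleGraph V)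
    (U : Set V)
    (T : SimpleGraph U)
    (hcomp : ∀ u ustar : U, T.Adj u ustar →
      ⋃ v ∈ {v : U | (deleteVert T u).Reachable ustar v},
          (H.neighborSet ↑u ∩ H.neighborSet (↑v : V)) =
        H.neighborSet ↑u ∩ H.neighborSet ↑ustar) :
    Arrangeable H U T := by
  intro u v p hp
  induction p with
  | nil => simp
  | cons h q ih =>
    simp only [Walk.support_cons, List.mem_cons, Set.iInter_iInter_eq_or_left]
    rw [← ih hp.of_cons, Set.inter_left_comm,
      Set.inter_eq_right.mpr (neighborSet_inter_subset_of_notMem_support (hcomp _ _ h) q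
        ((Walk.cons_isPath_iff h q).mp hp).2)]

/-- conversely, if for each `u ∈ U`, each component `C` of
`T \ {u}` and the vertex `u* ∈ C` adjacent to `u` the equality
`⋃_{v ∈ C}(Λ_u ∩ Λ_v) = Λ_u ∩ Λ_{u*}` holds, then `U` is `T`-arrangeable. -/
theorem arrangeable_of_component_union (V : Type) (H : SimpleGraph V)
    (hbip : H.Colorable 2)
    (U : Set V) (hindep : ∀ a ∈ U, ∀ b ∈ U, ¬H.Adj a b)
    (T : SimpleGraph U) (hT : T.IsTree)
    (hcomp : ∀ u ustar : U, T.Adj u ustar →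
      ⋃ v ∈ {v : U | (deleteVert T u).Reachable ustar v},
          (H.neighborSet ↑u ∩ H.neighborSet (↑v : V)) =
        H.neighborSet ↑u ∩ H.neighborSet ↑ustar) :
    Arrangeable H U T :=
  arrangeable_of_component_union_general V H U T hcomp
end

section
/- Let H be a bipartite graph with bipartition A ∪ B containing vertices a_1, a_2 ∈ A such that every a ∈ A satisfies Λ_a ⊆ Λ_{a_1} or Λ_a ⊆ Λ_{a_2}. Then H is tree-arrangeable: the tree T on A with edge {a_1,a_2}, where each a ∈ A\{a_1,a_2} with Λ_a ⊆ Λ_{a_1} is a leaf attached to a_1 and the remaining vertices are leaves attached to a_2, makes A T-arrangeable. -/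
/-- The "double star" with centers `a₁, a₂` joined by an edge, each remaining
vertex `x` being a leaf attached to its assigned center `c x`. -/
def doubleStar {α : Type} (a₁ a₂ : α) (c : α → α) : SimpleGraph α where
  Adj x y := x ≠ y ∧ ((x = a₁ ∧ y = a₂) ∨ (x = a₂ ∧ y = a₁) ∨
    (y = c x ∧ x ≠ a₁ ∧ x ≠ a₂) ∨ (x = c y ∧ y ≠ a₁ ∧ y ≠ a₂))
  symm := by
    constructor
    rintro x y ⟨h, h2⟩
    refine ⟨h.symm, ?_⟩
    tauto
  loopless := by
    constructor
    rintro x ⟨h, -⟩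
    exact h rfl

/-!
In the double star, the second vertex `y` of a path `x, y, …, v` is the center of `x`, the
center of `v`, or `v` itself: leaves have a single neighbour, so a path can only continue past
the central edge into a leaf and must stop there. As `Λ_a ⊆ Λ_{c a}`, this gives
`Λ_x ∩ Λ_v ⊆ Λ_y`, and peeling off the first vertex of the path gives
`Λ_x ∩ Λ_v = Λ_x ∩ Λ_y ∩ Λ_v = ⋂_{w ∈ P} Λ_w` by induction.
-/

open SimpleGraph

theorem SimpleGraph.Walk.IsPath.eq_of_cons_of_forall_adj_eq {V : Type*} {G : SimpleGraph V}
    {x y v : V} {h : G.Adj x y} {q : G.Walk y v} (hp : (cons h q).IsPath)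
    (hy : ∀ z, G.Adj y z → z = x) : v = y := by
  cases q with
  | nil => rfl
  | cons h' q' =>
    obtain rfl := hy _ h'
    exact (((cons_isPath_iff _ _).mp hp).2 (by simp)).elim

theorem arrangeable_of_isPath_cons {V : Type} {H : SimpleGraph V} {U : Set V}
    {T : SimpleGraph U}
    (hstep : ∀ (x y v : U) (hxy : T.Adj x y) (q : T.Walk y v), (Walk.cons hxy q).IsPath →
      H.neighborSet x ∩ H.neighborSet v ⊆ H.neighborSet y) :
    Arrangeable H U T := by
  intro u v p hp
  induction p with
  | nil => simp
  | @cons x y v hxy q ih =>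
    have hstep := hstep x y v hxy q hp
    calc H.neighborSet x ∩ H.neighborSet v
        = H.neighborSet x ∩ (H.neighborSet y ∩ H.neighborSet v) :=
          Set.Subset.antisymm (fun w hw => ⟨hw.1, hstep hw, hw.2⟩) fun w hw => ⟨hw.1, hw.2.2⟩
      _ = H.neighborSet x ∩ ⋂ w ∈ q.support, H.neighborSet (w : V) := by
          rw [ih ((Walk.cons_isPath_iff _ _).mp hp).1]
      _ = ⋂ w ∈ (Walk.cons hxy q).support, H.neighborSet (w : V) := by
          simp only [Walk.support_cons, List.mem_cons, Set.iInter_iInter_eq_or_left]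

section doubleStar

variable {α : Type} {a₁ a₂ : α} {c : α → α}

theorem doubleStar_adj_eq_of_ne (hc : ∀ a, c a = a₁ ∨ c a = a₂) {x y : α}
    (hx₁ : x ≠ a₁) (hx₂ : x ≠ a₂) (h : (doubleStar a₁ a₂ c).Adj x y) : y = c x := by
  obtain ⟨-, ⟨rfl, -⟩ | ⟨rfl, -⟩ | ⟨hy, -⟩ | ⟨rfl, -⟩⟩ := h
  · exact absurd rfl hx₁
  · exact absurd rfl hx₂
  · exact hy
  · rcases hc y with h | h <;> simp_all

theorem doubleStar_eq_of_isPath_cons_of_ne (hc : ∀ a, c a = a₁ ∨ c a = a₂) {y z v : α}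
    (h : (doubleStar a₁ a₂ c).Adj y z) (hz₁ : z ≠ a₁) (hz₂ : z ≠ a₂)
    {q : (doubleStar a₁ a₂ c).Walk z v} (hp : (Walk.cons h q).IsPath) : v = z ∧ y = c z := by
  have hyz : y = c z := doubleStar_adj_eq_of_ne hc hz₁ hz₂ h.symm
  refine ⟨hp.eq_of_cons_of_forall_adj_eq fun w hw => ?_, hyz⟩
  rw [hyz, doubleStar_adj_eq_of_ne hc hz₁ hz₂ hw]

theorem doubleStar_snd_eq_of_isPath_cons (hc : ∀ a, c a = a₁ ∨ c a = a₂) {x y v : α}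
    (h : (doubleStar a₁ a₂ c).Adj x y) (q : (doubleStar a₁ a₂ c).Walk y v)
    (hp : (Walk.cons h q).IsPath) : y = c x ∨ y = c v ∨ v = y := by
  by_cases hx : x ≠ a₁ ∧ x ≠ a₂
  · exact Or.inl (doubleStar_adj_eq_of_ne hc hx.1 hx.2 h)
  by_cases hy : y ≠ a₁ ∧ y ≠ a₂
  · exact Or.inr (Or.inr (doubleStar_eq_of_isPath_cons_of_ne hc h hy.1 hy.2 hp).1)
  cases q with
  | nil => exact Or.inr (Or.inr rfl)
  | @cons _ z _ h' q' =>
    obtain ⟨hq, hxq⟩ := (Walk.cons_isPath_iff _ _).mp hp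
    have hzx : z ≠ x := fun hzx => hxq (by simp [← hzx])
    have hzy : z ≠ y := h'.ne.symm
    have hz : z ≠ a₁ ∧ z ≠ a₂ := by
      have hxy : x ≠ y := h.ne
      push Not at hx hy
      grind
    obtain ⟨rfl, hyz⟩ := doubleStar_eq_of_isPath_cons_of_ne hc h' hz.1 hz.2 hq
    exact Or.inr (Or.inl hyz)

end doubleStar

theorem arrangeable_doubleStar_general (V : Type) (H : SimpleGraph V) (A : Set V)
    (a₁ a₂ : A)
    (c : A → A)
    (hc : ∀ a : A, (c a = a₁ ∨ c a = a₂) ∧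
      H.neighborSet ↑a ⊆ H.neighborSet ↑(c a)) :
    Arrangeable H A (doubleStar a₁ a₂ c) := by
  refine arrangeable_of_isPath_cons fun x y v hxy q hp => ?_
  rcases doubleStar_snd_eq_of_isPath_cons (fun a => (hc a).1) hxy q hp with rfl | rfl | rfl
  · exact Set.inter_subset_left.trans (hc x).2
  · exact Set.inter_subset_right.trans (hc v).2
  · exact Set.inter_subset_right

/-- let `H` be bipartite with bipartition `A ∪ B` containing
`a₁, a₂ ∈ A` such that every `a ∈ A` satisfies `Λ_a ⊆ Λ_{a₁}` or
`Λ_a ⊆ Λ_{a₂}`. Then `H` is tree-arrangeable: the tree `T` on `A` with edge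
`{a₁,a₂}`, in which each other `a ∈ A` is a leaf attached to a center `c a`
with `Λ_a ⊆ Λ_{c a}`, makes `A` `T`-arrangeable. -/
theorem arrangeable_doubleStar (V : Type) (H : SimpleGraph V) (A B : Set V)
    (hcover : ∀ v : V, v ∈ A ∨ v ∈ B) (hdisj : Disjoint A B)
    (hedges : ∀ u w : V, H.Adj u w → (u ∈ A ∧ w ∈ B) ∨ (u ∈ B ∧ w ∈ A))
    (a₁ a₂ : A) (hne : a₁ ≠ a₂)
    (hmax : ∀ a : A, H.neighborSet ↑a ⊆ H.neighborSet ↑a₁ ∨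
      H.neighborSet ↑a ⊆ H.neighborSet ↑a₂)
    (c : A → A)
    (hc : ∀ a : A, (c a = a₁ ∨ c a = a₂) ∧
      H.neighborSet ↑a ⊆ H.neighborSet ↑(c a)) :
    Arrangeable H A (doubleStar a₁ a₂ c) :=
  arrangeable_doubleStar_general V H A a₁ a₂ c hc
end
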